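/- Fix t > 0 and let p₀ = Σ_{k=1}^K π_k N(μ_k, Σ_k) be a mixture of Gaussian densities on ℝ^m with π_k > 0 summing to 1. Then the denoising autoencoder Φ_t(x) = x + t ∇ log(W_{t/2} * p₀)(x) equals the responsibility-weighted combination Φ_t(x) = Σ_{k=1}^K γ_{kt}(x) [(I + tΣ_k^{-1})^{-1} x + (I + t^{-1}Σ_k)^{-1} μ_k], where γ_{kt}(x) = π_k N(x; μ_k, Σ_k + tI) / Σ_j π_j N(x; μ_j, Σ_j + tI). -/

import Mathlib

open Real MeasureTheory
open scoped RealInnerProductSpace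

noncomputable section

/-- The Gaussian heat kernel on `ℝ^m`. -/
def heatKernel (m : ℕ) (s : ℝ) (x : EuclideanSpace ℝ (Fin m)) : ℝ :=
  (4 * π * s) ^ (-(m : ℝ) / 2) * Real.exp (-‖x‖ ^ 2 / (4 * s))

/-- Density of the multivariate Gaussian `N(μ, S)` on `ℝ^m`. -/
def gaussDensity (m : ℕ) (μ : EuclideanSpace ℝ (Fin m))
    (S : Matrix (Fin m) (Fin m) ℝ) (x : EuclideanSpace ℝ (Fin m)) : ℝ :=
  (2 * π) ^ (-(m : ℝ) / 2) * S.det ^ (-(1 : ℝ) / 2) *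
    Real.exp (-(1 / 2) * ⟪x - μ, Matrix.toEuclideanLin S⁻¹ (x - μ)⟫)

/-!
The heat kernel `W_{t/2}` is the Gaussian density `N(0, tI)`, and completing the square in the
convolution integral shows `N(0, T) * N(μ, S) = N(μ, S + T)`; so smoothing the mixture replaces
each `Σ_k` by `Σ_k + tI`. The gradient of the logarithm of a mixture is the
responsibility-weighted average of the component scores `-(Σ_k + tI)⁻¹ (x - μ_k)`, and since the
responsibilities sum to one the identity reduces to
`x - t (Σ + tI)⁻¹ (x - μ) = (I + tΣ⁻¹)⁻¹ x + (I + t⁻¹Σ)⁻¹ μ`.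
-/

namespace Matrix

variable {n R K : Type*}

lemma IsHermitian.isSymm {S : Matrix n n ℝ} (hS : S.IsHermitian) : S.IsSymm :=
  (conjTranspose_eq_transpose_of_trivial S).symm.trans hS.eq

variable [Fintype n]

section CommRing

variable [CommRing R]

lemma IsSymm.add_dotProduct_mulVec_add {M : Matrix n n R} (hM : M.IsSymm) (u v : n → R) :
    (u + v) ⬝ᵥ M *ᵥ (u + v) = u ⬝ᵥ M *ᵥ u + 2 * (u ⬝ᵥ M *ᵥ v) + v ⬝ᵥ M *ᵥ v := by
  have hvu : v ⬝ᵥ M *ᵥ u = u ⬝ᵥ M *ᵥ v := by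
    rw [dotProduct_mulVec, ← mulVec_transpose, hM.eq, dotProduct_comm]
  simp only [mulVec_add, dotProduct_add, add_dotProduct, hvu]
  ring

lemma sub_dotProduct_mulVec_sub_comm (a b : n → R) (M : Matrix n n R) :
    (a - b) ⬝ᵥ M *ᵥ (a - b) = (b - a) ⬝ᵥ M *ᵥ (b - a) := by
  rw [← neg_sub b a, mulVec_neg, dotProduct_neg, neg_dotProduct, neg_neg]

variable [DecidableEq n]

lemma mul_inv_add_inv_mul {A B : Matrix n n R} (hA : IsUnit A.det) (hB : IsUnit B.det) :
    B * (A⁻¹ + B⁻¹) * A = A + B := by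
  rw [mul_add, add_mul, mul_nonsing_inv _ hB, one_mul, mul_assoc, nonsing_inv_mul _ hA, mul_one,
    add_comm]

lemma inv_add_eq_inv_mul_inv_add_inv_mul_inv {A B : Matrix n n R} (hA : IsUnit A.det)
    (hB : IsUnit B.det) : (A + B)⁻¹ = A⁻¹ * (A⁻¹ + B⁻¹)⁻¹ * B⁻¹ := by
  rw [← mul_inv_add_inv_mul hA hB, mul_inv_rev, mul_inv_rev, mul_assoc]

/-- Completing the square around the precision-weighted mean `(A⁻¹ + B⁻¹)⁻¹ (A⁻¹ a + B⁻¹ b)`. -/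
lemma dotProduct_inv_mulVec_add_dotProduct_inv_mulVec {A B : Matrix n n R} (hA : A.IsSymm)
    (hB : B.IsSymm) (hA' : IsUnit A.det) (hB' : IsUnit B.det) (hW : IsUnit (A⁻¹ + B⁻¹).det)
    (a b z : n → R) :
    (z - a) ⬝ᵥ A⁻¹ *ᵥ (z - a) + (z - b) ⬝ᵥ B⁻¹ *ᵥ (z - b) =
      (a - b) ⬝ᵥ (A + B)⁻¹ *ᵥ (a - b) +
        (z - (A⁻¹ + B⁻¹)⁻¹ *ᵥ (A⁻¹ *ᵥ a + B⁻¹ *ᵥ b)) ⬝ᵥ (A⁻¹ + B⁻¹) *ᵥ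
          (z - (A⁻¹ + B⁻¹)⁻¹ *ᵥ (A⁻¹ *ᵥ a + B⁻¹ *ᵥ b)) := by
  -- `z - a = (z - c) - u` and `z - b = (z - c) + v` with `A⁻¹ u = B⁻¹ v = (A + B)⁻¹ (a - b)`,
  -- so the cross terms cancel, and `u + v = a - b` collects the constant terms.
  set c := (A⁻¹ + B⁻¹)⁻¹ *ᵥ (A⁻¹ *ᵥ a + B⁻¹ *ᵥ b)
  set d := a - b
  set u := (A⁻¹ + B⁻¹)⁻¹ *ᵥ B⁻¹ *ᵥ d
  set v := (A⁻¹ + B⁻¹)⁻¹ *ᵥ A⁻¹ *ᵥ d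
  have hWW : (A⁻¹ + B⁻¹)⁻¹ * (A⁻¹ + B⁻¹) = 1 := nonsing_inv_mul _ hW
  have hcu : c + u = a := by
    have : A⁻¹ *ᵥ a + B⁻¹ *ᵥ b + B⁻¹ *ᵥ d = (A⁻¹ + B⁻¹) *ᵥ a := by
      simp only [d, add_mulVec, mulVec_sub]; abel
    rw [← mulVec_add, this, mulVec_mulVec, hWW, one_mulVec]
  have hcv : c - v = b := by
    have : A⁻¹ *ᵥ a + B⁻¹ *ᵥ b - A⁻¹ *ᵥ d = (A⁻¹ + B⁻¹) *ᵥ b := by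
      simp only [d, add_mulVec, mulVec_sub]; abel
    rw [← mulVec_sub, this, mulVec_mulVec, hWW, one_mulVec]
  have hAu : A⁻¹ *ᵥ u = (A + B)⁻¹ *ᵥ d := by
    rw [mulVec_mulVec, mulVec_mulVec, inv_add_eq_inv_mul_inv_add_inv_mul_inv hA' hB']
  have hBv : B⁻¹ *ᵥ v = (A + B)⁻¹ *ᵥ d := by
    rw [mulVec_mulVec, mulVec_mulVec, add_comm A B, add_comm A⁻¹ B⁻¹,
      inv_add_eq_inv_mul_inv_add_inv_mul_inv hB' hA']
  have huv : u + v = d := by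
    simp only [u, v]
    rw [mulVec_mulVec, mulVec_mulVec, ← add_mulVec, ← mul_add, add_comm B⁻¹, hWW, one_mulVec]
  have hza : z - a = (z - c) + -u := by rw [← hcu]; abel
  have hzb : z - b = (z - c) + v := by rw [← hcv]; abel
  rw [hza, hzb, hA.inv.add_dotProduct_mulVec_add, hB.inv.add_dotProduct_mulVec_add]
  nth_rw 1 [← huv]
  simp only [mulVec_neg, dotProduct_neg, neg_dotProduct, neg_neg, hAu, hBv, add_mulVec,
    dotProduct_add, add_dotProduct]
  ring

lemma inv_one_add_smul_inv {S : Matrix n n R} {t : R} (hS : IsUnit S.det)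
    (hSt : IsUnit (S + t • 1).det) : (1 + t • S⁻¹)⁻¹ = 1 - t • (S + t • 1)⁻¹ := by
  refine inv_eq_right_inv ?_
  have h1 : 1 + t • S⁻¹ = S⁻¹ * (S + t • 1) := by
    rw [mul_add, nonsing_inv_mul _ hS, Matrix.mul_smul, mul_one]
  have h2 : (S + t • 1) * (1 - t • (S + t • 1)⁻¹) = S := by
    rw [mul_sub, mul_one, Matrix.mul_smul, mul_nonsing_inv _ hSt, add_sub_cancel_right]
  rw [h1, mul_assoc, h2, nonsing_inv_mul _ hS]

end CommRing

section Field

variable [DecidableEq n] [Field K]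

lemma inv_smul_one {t : K} (ht : t ≠ 0) :
    (t • (1 : Matrix n n K))⁻¹ = t⁻¹ • 1 :=
  inv_eq_left_inv (by rw [smul_mul_smul_comm, inv_mul_cancel₀ ht, one_mul, one_smul])

lemma inv_one_add_inv_smul {S : Matrix n n K} {t : K} (ht : t ≠ 0)
    (hSt : IsUnit (S + t • 1).det) : (1 + t⁻¹ • S)⁻¹ = t • (S + t • 1)⁻¹ := by
  refine inv_eq_right_inv ?_
  rw [Matrix.mul_smul, ← Matrix.smul_mul, smul_add, smul_smul, mul_inv_cancel₀ ht, one_smul,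
    add_comm, mul_nonsing_inv _ hSt]

end Field

section Real

variable [DecidableEq n]

open scoped MatrixOrder

lemma inner_toEuclideanLin (M : Matrix n n ℝ) (u v : EuclideanSpace ℝ n) :
    ⟪u, toEuclideanLin M v⟫ = u.ofLp ⬝ᵥ M *ᵥ v.ofLp := by
  simp [EuclideanSpace.inner_eq_star_dotProduct, toLpLin_apply, dotProduct_comm]

lemma PosDef.det_sqrt {C : Matrix n n ℝ} (hC : C.PosDef) : (CFC.sqrt C).det = √C.det := by
  rw [hC.posSemidef.det_sqrt, RCLike.sqrt_of_nonneg hC.posSemidef.det_nonneg]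
  rfl

lemma PosDef.inner_toEuclideanLin_sqrt {C : Matrix n n ℝ} (hC : C.PosDef)
    (u : EuclideanSpace ℝ n) :
    ⟪toEuclideanLin (CFC.sqrt C) u, toEuclideanLin C⁻¹ (toEuclideanLin (CFC.sqrt C) u)⟫ =
      ‖u‖ ^ 2 := by
  set R := CFC.sqrt C
  have hRR : R * R = C := CFC.sqrt_mul_sqrt_self C hC.posSemidef.nonneg
  have hR : Rᵀ = R := (nonneg_iff_posSemidef.mp (CFC.sqrt_nonneg C)).isHermitian.isSymm
  have hRu : IsUnit R.det := by
    rw [isUnit_iff_ne_zero, hC.det_sqrt]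
    exact (Real.sqrt_pos.mpr hC.det_pos).ne'
  have : Rᵀ * C⁻¹ * R = 1 := by
    rw [hR, ← hRR, mul_inv_rev, ← mul_assoc R R⁻¹, mul_nonsing_inv _ hRu, one_mul,
      nonsing_inv_mul _ hRu]
  rw [inner_toEuclideanLin, ← real_inner_self_eq_norm_sq, EuclideanSpace.inner_eq_star_dotProduct]
  simp only [toLpLin_apply, star_trivial]
  rw [dotProduct_comm, ← dotProduct_transpose_mulVec, mulVec_mulVec, mulVec_mulVec, this,
    one_mulVec]

end Real

end Matrix

section ChangeOfVariables

variable {E F : Type*} [NormedAddCommGroup E] [NormedSpace ℝ E] [MeasurableSpace E]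
  [BorelSpace E] [FiniteDimensional ℝ E] [NormedAddCommGroup F] [NormedSpace ℝ F]
  (μ : Measure E) [μ.IsAddHaarMeasure]

lemma MeasureTheory.integral_comp_linearMap {f : E →ₗ[ℝ] E} (hf : LinearMap.det f ≠ 0)
    (g : E → F) : ∫ x, g (f x) ∂μ = |LinearMap.det f|⁻¹ • ∫ x, g x ∂μ := by
  let e := (f.equivOfDetNeZero hf).toContinuousLinearEquiv.toHomeomorph.toMeasurableEquiv
  have he : (e : E → E) = f := rfl
  rw [← he, ← integral_map_equiv, he, Measure.map_linearMap_addHaar_eq_smul_addHaar μ hf,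
    integral_smul_measure, ENNReal.toReal_ofReal (abs_nonneg _), abs_inv]

end ChangeOfVariables

section Gradient

variable {F : Type*} [NormedAddCommGroup F] [InnerProductSpace ℝ F] [CompleteSpace F]
  {f : F → ℝ} {g x : F}

lemma HasGradientAt.const_mul (c : ℝ) (h : HasGradientAt f g x) :
    HasGradientAt (fun y => c * f y) (c • g) x := by
  rw [hasGradientAt_iff_hasFDerivAt, map_smul]
  exact (hasGradientAt_iff_hasFDerivAt.mp h).const_mul c

lemma HasGradientAt.fun_sum {ι : Type*} (s : Finset ι) {f : ι → F → ℝ} {g : ι → F}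
    (h : ∀ i ∈ s, HasGradientAt (f i) (g i) x) :
    HasGradientAt (fun y => ∑ i ∈ s, f i y) (∑ i ∈ s, g i) x := by
  rw [hasGradientAt_iff_hasFDerivAt, map_sum]
  exact HasFDerivAt.fun_sum fun i hi => hasGradientAt_iff_hasFDerivAt.mp (h i hi)

lemma HasGradientAt.log (h : HasGradientAt f g x) (hx : f x ≠ 0) :
    HasGradientAt (fun y => Real.log (f y)) ((f x)⁻¹ • g) x := by
  rw [hasGradientAt_iff_hasFDerivAt, map_smul]
  exact (hasGradientAt_iff_hasFDerivAt.mp h).log hx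

end Gradient

section Gaussian

variable {m : ℕ}

open scoped MatrixOrder in
lemma integral_exp_neg_half_inner_inv {C : Matrix (Fin m) (Fin m) ℝ} (hC : C.PosDef) :
    ∫ z, exp (-(1 / 2) * ⟪z, Matrix.toEuclideanLin C⁻¹ z⟫) =
      (2 * π) ^ ((m : ℝ) / 2) * √C.det := by
  have hdet : LinearMap.det (Matrix.toEuclideanLin (CFC.sqrt C)) = √C.det := by
    rw [LinearMap.det_toLpLin, hC.det_sqrt]
  have hpos : 0 < √C.det := Real.sqrt_pos.mpr hC.det_pos
  have hsub := integral_comp_linearMap volume (hdet.trans_ne hpos.ne')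
    (fun z => exp (-(1 / 2) * ⟪z, Matrix.toEuclideanLin C⁻¹ z⟫))
  simp only [hC.inner_toEuclideanLin_sqrt, hdet, abs_of_pos hpos,
    GaussianFourier.integral_rexp_neg_mul_sq_norm (one_half_pos (α := ℝ)),
    finrank_euclideanSpace_fin] at hsub
  rw [eq_inv_smul_iff₀ hpos.ne', smul_eq_mul] at hsub
  rw [← hsub, show π / (1 / 2) = 2 * π by ring, mul_comm]

lemma integral_gaussDensity (μ : EuclideanSpace ℝ (Fin m)) {C : Matrix (Fin m) (Fin m) ℝ}
    (hC : C.PosDef) : ∫ z, gaussDensity m μ C z = 1 := by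
  have hc := (integral_exp_neg_half_inner_inv hC).symm ▸
    integral_sub_right_eq_self (fun z => exp (-(1 / 2) * ⟪z, Matrix.toEuclideanLin C⁻¹ z⟫)) μ
  simp only [gaussDensity, integral_const_mul, hc, neg_div,
    Real.rpow_neg (by positivity : 0 ≤ 2 * π), Real.rpow_neg hC.det_pos.le, Real.sqrt_eq_rpow]
  field_simp [(Real.rpow_pos_of_pos hC.det_pos _).ne']

lemma integrable_gaussDensity (μ : EuclideanSpace ℝ (Fin m)) {C : Matrix (Fin m) (Fin m) ℝ}
    (hC : C.PosDef) : Integrable (gaussDensity m μ C) :=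
  Integrable.of_integral_ne_zero (by simp [integral_gaussDensity μ hC])

lemma gaussDensity_pos (μ : EuclideanSpace ℝ (Fin m)) {C : Matrix (Fin m) (Fin m) ℝ}
    (hC : 0 < C.det) (x : EuclideanSpace ℝ (Fin m)) : 0 < gaussDensity m μ C x := by
  unfold gaussDensity
  positivity

lemma heatKernel_half_eq_gaussDensity {t : ℝ} (ht : 0 < t) :
    heatKernel m (t / 2) = gaussDensity m 0 (t • 1) := by
  ext v
  have hconst : (4 * π * (t / 2)) ^ (-(m : ℝ) / 2) =
      (2 * π) ^ (-(m : ℝ) / 2) * (t • (1 : Matrix (Fin m) (Fin m) ℝ)).det ^ (-(1 : ℝ) / 2) := by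
    rw [Matrix.det_smul, Matrix.det_one, mul_one, Fintype.card_fin, ← Real.rpow_natCast,
      ← Real.rpow_mul ht.le, show 4 * π * (t / 2) = 2 * π * t by ring,
      Real.mul_rpow (by positivity) ht.le]
    ring_nf
  have hexp : -‖v‖ ^ 2 / (4 * (t / 2)) =
      -(1 / 2) * ⟪v - 0, Matrix.toEuclideanLin (t • (1 : Matrix (Fin m) (Fin m) ℝ))⁻¹ (v - 0)⟫ := by
    rw [sub_zero, Matrix.inv_smul_one ht.ne', map_smul, Matrix.toLpLin_one, LinearMap.smul_apply,
      LinearMap.id_apply, real_inner_smul_right, real_inner_self_eq_norm_sq]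
    field_simp
    ring
  rw [heatKernel, gaussDensity, hconst, hexp]

lemma gaussDensity_mul_gaussDensity_eq {x₁ x₂ x₃ x₄ μ₁ μ₂ μ₃ μ₄ : EuclideanSpace ℝ (Fin m)}
    {C₁ C₂ C₃ C₄ : Matrix (Fin m) (Fin m) ℝ} (h₁ : 0 ≤ C₁.det) (h₂ : 0 ≤ C₂.det)
    (h₃ : 0 ≤ C₃.det) (h₄ : 0 ≤ C₄.det) (hdet : C₁.det * C₂.det = C₃.det * C₄.det)
    (hq : ⟪x₁ - μ₁, Matrix.toEuclideanLin C₁⁻¹ (x₁ - μ₁)⟫ +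
        ⟪x₂ - μ₂, Matrix.toEuclideanLin C₂⁻¹ (x₂ - μ₂)⟫ =
      ⟪x₃ - μ₃, Matrix.toEuclideanLin C₃⁻¹ (x₃ - μ₃)⟫ +
        ⟪x₄ - μ₄, Matrix.toEuclideanLin C₄⁻¹ (x₄ - μ₄)⟫) :
    gaussDensity m μ₁ C₁ x₁ * gaussDensity m μ₂ C₂ x₂ =
      gaussDensity m μ₃ C₃ x₃ * gaussDensity m μ₄ C₄ x₄ := by
  have key : ∀ a b c e f : ℝ, c * a * exp (-(1 / 2) * e) * (c * b * exp (-(1 / 2) * f)) =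
      c * c * (a * b) * exp (-(1 / 2) * (e + f)) := fun a b c e f => by
    rw [mul_add, exp_add]; ring
  simp only [gaussDensity, key, ← Real.mul_rpow h₁ h₂, ← Real.mul_rpow h₃ h₄, hdet, hq]

lemma gaussDensity_sub_mul_gaussDensity {T S : Matrix (Fin m) (Fin m) ℝ} (hT : T.PosDef)
    (hS : S.PosDef) (μ y z : EuclideanSpace ℝ (Fin m)) :
    gaussDensity m 0 T (y - z) * gaussDensity m μ S z =
      gaussDensity m μ (S + T) y *
        gaussDensity m (Matrix.toEuclideanLin (S⁻¹ + T⁻¹)⁻¹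
          (Matrix.toEuclideanLin S⁻¹ μ + Matrix.toEuclideanLin T⁻¹ y)) (S⁻¹ + T⁻¹)⁻¹ z := by
  have hSu : IsUnit S.det := isUnit_iff_ne_zero.mpr hS.det_pos.ne'
  have hTu : IsUnit T.det := isUnit_iff_ne_zero.mpr hT.det_pos.ne'
  have hW := hS.inv.add hT.inv
  have hWu : IsUnit (S⁻¹ + T⁻¹).det := isUnit_iff_ne_zero.mpr hW.det_pos.ne'
  refine gaussDensity_mul_gaussDensity_eq hT.det_pos.le hS.det_pos.le (hS.add hT).det_pos.le
    hW.inv.det_pos.le ?_ ?_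
  · have h := congrArg Matrix.det (Matrix.mul_inv_add_inv_mul hSu hTu)
    rw [Matrix.det_mul, Matrix.det_mul] at h
    rw [← h, Matrix.det_nonsing_inv, Ring.inverse_eq_inv']
    field_simp [hW.det_pos.ne']
  · have hcs := Matrix.dotProduct_inv_mulVec_add_dotProduct_inv_mulVec hS.isHermitian.isSymm
      hT.isHermitian.isSymm hSu hTu hWu μ.ofLp y.ofLp z.ofLp
    rw [Matrix.nonsing_inv_nonsing_inv _ hWu]
    simp only [Matrix.inner_toEuclideanLin, sub_zero, WithLp.ofLp_sub, WithLp.ofLp_add,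
      Matrix.ofLp_toLpLin, Matrix.toLin'_apply]
    rw [Matrix.sub_dotProduct_mulVec_sub_comm y.ofLp, Matrix.sub_dotProduct_mulVec_sub_comm y.ofLp]
    linarith

lemma integrable_gaussDensity_sub_mul_gaussDensity {T S : Matrix (Fin m) (Fin m) ℝ}
    (hT : T.PosDef) (hS : S.PosDef) (μ y : EuclideanSpace ℝ (Fin m)) :
    Integrable (fun z => gaussDensity m 0 T (y - z) * gaussDensity m μ S z) := by
  simp only [gaussDensity_sub_mul_gaussDensity hT hS]
  exact (integrable_gaussDensity _ (hS.inv.add hT.inv).inv).const_mul _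

lemma integral_gaussDensity_sub_mul_gaussDensity {T S : Matrix (Fin m) (Fin m) ℝ}
    (hT : T.PosDef) (hS : S.PosDef) (μ y : EuclideanSpace ℝ (Fin m)) :
    ∫ z, gaussDensity m 0 T (y - z) * gaussDensity m μ S z = gaussDensity m μ (S + T) y := by
  simp only [gaussDensity_sub_mul_gaussDensity hT hS, integral_const_mul,
    integral_gaussDensity _ (hS.inv.add hT.inv).inv, mul_one]

lemma integral_heatKernel_mul_mixture {ι : Type*} [Fintype ι] {t : ℝ} (ht : 0 < t) (w : ι → ℝ)
    (μ : ι → EuclideanSpace ℝ (Fin m)) {S : ι → Matrix (Fin m) (Fin m) ℝ}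
    (hS : ∀ k, (S k).PosDef) (y : EuclideanSpace ℝ (Fin m)) :
    ∫ z, heatKernel m (t / 2) (y - z) * ∑ k, w k * gaussDensity m (μ k) (S k) z =
      ∑ k, w k * gaussDensity m (μ k) (S k + t • 1) y := by
  have hT : (t • (1 : Matrix (Fin m) (Fin m) ℝ)).PosDef := Matrix.PosDef.one.smul ht
  simp only [heatKernel_half_eq_gaussDensity ht, Finset.mul_sum, mul_left_comm _ (w _)]
  rw [integral_finsetSum _ fun k _ =>
    (integrable_gaussDensity_sub_mul_gaussDensity hT (hS k) (μ k) y).const_mul (w k)]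
  simp only [integral_const_mul, integral_gaussDensity_sub_mul_gaussDensity hT (hS _)]

lemma hasGradientAt_gaussDensity {C : Matrix (Fin m) (Fin m) ℝ} (hC : C.IsHermitian)
    (μ x : EuclideanSpace ℝ (Fin m)) :
    HasGradientAt (gaussDensity m μ C)
      (-gaussDensity m μ C x • Matrix.toEuclideanLin C⁻¹ (x - μ)) x := by
  set A := LinearMap.toContinuousLinearMap (Matrix.toEuclideanLin C⁻¹)
  have hA : (A : EuclideanSpace ℝ (Fin m) →ₗ[ℝ] _).IsSymmetric :=
    Matrix.isSymmetric_toEuclideanLin_iff.mpr hC.inv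
  have hq : HasFDerivAt (fun y => ⟪y - μ, A (y - μ)⟫) ((2 : ℝ) • innerSL ℝ (A (x - μ))) x := by
    have h := (hA.hasStrictFDerivAt_reApplyInnerSelf (x - μ)).hasFDerivAt.comp x
      ((hasFDerivAt_id x).sub_const μ)
    refine (h.congr_fderiv ?_).congr_of_eventuallyEq (.of_forall fun y => ?_)
    · ext v; simp
    · simp [ContinuousLinearMap.reApplyInnerSelf_apply, real_inner_comm]
  have hfun : gaussDensity m μ C = fun y =>
      (2 * π) ^ (-(m : ℝ) / 2) * C.det ^ (-(1 : ℝ) / 2) * exp (-(1 / 2) * ⟪y - μ, A (y - μ)⟫) :=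
    rfl
  rw [hasGradientAt_iff_hasFDerivAt, hfun]
  refine (((hq.const_mul (-(1 / 2 : ℝ))).exp).const_mul _).congr_fderiv ?_
  ext v
  simp only [A, LinearMap.coe_toContinuousLinearMap', InnerProductSpace.toDual_apply_apply,
    smul_apply, coe_innerSL_apply, smul_eq_mul, neg_apply, real_inner_smul_left, neg_smul,
    inner_neg_left]
  ring

lemma hasGradientAt_log_mixture {ι : Type*} [Fintype ι] (w : ι → ℝ)
    (μ : ι → EuclideanSpace ℝ (Fin m)) {C : ι → Matrix (Fin m) (Fin m) ℝ}
    (hC : ∀ k, (C k).IsHermitian) (x : EuclideanSpace ℝ (Fin m))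
    (hp : ∑ k, w k * gaussDensity m (μ k) (C k) x ≠ 0) :
    HasGradientAt (fun y => Real.log (∑ k, w k * gaussDensity m (μ k) (C k) y))
      (-∑ k, (w k * gaussDensity m (μ k) (C k) x / ∑ j, w j * gaussDensity m (μ j) (C j) x) •
        Matrix.toEuclideanLin (C k)⁻¹ (x - μ k)) x := by
  convert (HasGradientAt.fun_sum Finset.univ fun k _ =>
    (hasGradientAt_gaussDensity (hC k) (μ k) x).const_mul (w k)).log hp using 1
  simp only [Finset.smul_sum, smul_smul, ← Finset.sum_neg_distrib, ← neg_smul]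
  refine Finset.sum_congr rfl fun k _ => ?_
  congr 1
  ring

lemma Matrix.PosDef.toEuclideanLin_inv_one_add_smul_inv_add {S : Matrix (Fin m) (Fin m) ℝ}
    (hS : S.PosDef) {t : ℝ} (ht : 0 < t) (x μ : EuclideanSpace ℝ (Fin m)) :
    Matrix.toEuclideanLin (1 + t • S⁻¹)⁻¹ x + Matrix.toEuclideanLin (1 + t⁻¹ • S)⁻¹ μ =
      x - t • Matrix.toEuclideanLin (S + t • 1)⁻¹ (x - μ) := by
  have hSt : IsUnit (S + t • 1).det :=
    isUnit_iff_ne_zero.mpr (hS.add (Matrix.PosDef.one.smul ht)).det_pos.ne'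
  rw [Matrix.inv_one_add_smul_inv (isUnit_iff_ne_zero.mpr hS.det_pos.ne') hSt,
    Matrix.inv_one_add_inv_smul ht.ne' hSt]
  simp only [map_sub, map_smul, Matrix.toLpLin_one, LinearMap.sub_apply, LinearMap.smul_apply,
    LinearMap.id_apply, smul_sub]
  abel

end Gaussian

/-- For a Gaussian mixture `p₀ = ∑ π_k N(μ_k, Σ_k)`, the DAE
`Φ_t(x) = x + t ∇ log(W_{t/2} * p₀)(x)` is the responsibility-weighted combination
`Φ_t(x) = ∑ γ_{kt}(x) [(I + tΣ_k⁻¹)⁻¹ x + (I + t⁻¹Σ_k)⁻¹ μ_k]` with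
`γ_{kt}(x) = π_k N(x; μ_k, Σ_k + tI) / ∑ⱼ πⱼ N(x; μⱼ, Σⱼ + tI)`. -/
theorem dae_gaussian_mixture (m K : ℕ) (t : ℝ) (ht : 0 < t)
    (w : Fin K → ℝ) (hw : ∀ k, 0 < w k) (hw1 : ∑ k, w k = 1)
    (μ : Fin K → EuclideanSpace ℝ (Fin m))
    (S : Fin K → Matrix (Fin m) (Fin m) ℝ) (hS : ∀ k, (S k).PosDef)
    (x : EuclideanSpace ℝ (Fin m)) :
    x + t • gradient
        (fun y => Real.log
          (∫ z, heatKernel m (t / 2) (y - z) * ∑ k, w k * gaussDensity m (μ k) (S k) z)) x =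
      ∑ k, (w k * gaussDensity m (μ k) (S k + t • 1) x /
            ∑ j, w j * gaussDensity m (μ j) (S j + t • 1) x) •
          (Matrix.toEuclideanLin (1 + t • (S k)⁻¹)⁻¹ x +
            Matrix.toEuclideanLin (1 + t⁻¹ • S k)⁻¹ (μ k)) := by
  have hSt : ∀ k, (S k + t • 1).PosDef := fun k => (hS k).add (Matrix.PosDef.one.smul ht)
  have hp : 0 < ∑ j, w j * gaussDensity m (μ j) (S j + t • 1) x :=
    Finset.sum_pos (fun j _ => mul_pos (hw j) (gaussDensity_pos _ (hSt j).det_pos x))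
      (Finset.nonempty_of_sum_ne_zero (hw1 ▸ one_ne_zero))
  have hγ : ∑ k, w k * gaussDensity m (μ k) (S k + t • 1) x /
      ∑ j, w j * gaussDensity m (μ j) (S j + t • 1) x = 1 := by
    rw [← Finset.sum_div, div_self hp.ne']
  simp only [integral_heatKernel_mul_mixture ht w μ hS]
  rw [(hasGradientAt_log_mixture w μ (fun k => (hSt k).isHermitian) x hp.ne').gradient]
  simp only [(hS _).toEuclideanLin_inv_one_add_smul_inv_add ht, smul_sub, Finset.sum_sub_distrib,
    ← Finset.sum_smul, hγ, one_smul, smul_neg, ← sub_eq_add_neg, Finset.smul_sum, smul_comm t]
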